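/- Let n > 2 be an odd square-free integer, let r be a real number, and let J be the character polynomial of degree n−1. Then max_{|z|=1} |J_r(z)| ≤ 2 n^{1/2} log n. -/

import Mathlib

noncomputable section

open Polynomial Filter

/-- The primitive `n`-th root of unity `e^{2πi/n}` in `ℂ`. -/
def zetaC (n : ℕ) : ℂ := Complex.exp (2 * Real.pi * Complex.I / n)

/-- The `L_α` norm of a polynomial on the unit circle. -/
def lnorm (α : ℝ) (A : Polynomial ℂ) : ℝ :=
  ((2 * Real.pi)⁻¹ * ∫ θ in (0:ℝ)..(2 * Real.pi),
      ‖A.eval (Complex.exp (Complex.I * θ))‖ ^ α) ^ α⁻¹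

/-- The merit factor `F(A) = ‖A‖₂⁴ / (‖A‖₄⁴ - ‖A‖₂⁴)`. -/
def meritF (A : Polynomial ℂ) : ℝ :=
  (lnorm 2 A) ^ 4 / ((lnorm 4 A) ^ 4 - (lnorm 2 A) ^ 4)

/-- The reciprocal merit factor `1/F(A) = (‖A‖₄⁴ - ‖A‖₂⁴) / ‖A‖₂⁴`. -/
def invMF (A : Polynomial ℂ) : ℝ :=
  ((lnorm 4 A) ^ 4 - (lnorm 2 A) ^ 4) / (lnorm 2 A) ^ 4

/-- The rotation `A_r(z) = z^{-⌊nr⌋} A(z) mod (z^n - 1)`. -/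
def rot (n : ℕ) (r : ℝ) (A : Polynomial ℂ) : Polynomial ℂ :=
  (Polynomial.X ^ (((-⌊(n : ℝ) * r⌋) % (n : ℤ)).toNat) * A) % (Polynomial.X ^ n - 1)

/-- The character polynomial `J(z) = ∑_{j=1}^{n-1} (j|n) z^j`. -/
def charPoly (n : ℕ) : Polynomial ℂ :=
  ∑ j ∈ Finset.range n, Polynomial.C ((jacobiSym j n : ℤ) : ℂ) * Polynomial.X ^ j

/-- `f(r) = 1/(1/6 + 8(|r|-1/4)²)` for `-1/2 < r ≤ 1/2`, extended with period 1. -/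
def fLit (r : ℝ) : ℝ :=
  1 / (1/6 + 8 * (|(if Int.fract r ≤ 1/2 then Int.fract r else Int.fract r - 1)| - 1/4) ^ 2)

/-- `𝒱_n`: polynomials `∑_{j=0}^{n-1} v_j z^j` with `v_j ∈ {0,1,-1}` and
`v_j = 0 ↔ gcd(j,n) = 1`. -/
def VSet (n : ℕ) : Set (Polynomial ℂ) :=
  {V | (∀ j, n ≤ j → V.coeff j = 0) ∧
       ∀ j < n, (V.coeff j = 0 ∨ V.coeff j = 1 ∨ V.coeff j = -1) ∧
         (V.coeff j = 0 ↔ Nat.gcd j n = 1)}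

/-- The Littlewood-completion polynomial `V(z) = ∑_{0≤j<n, gcd(j,n)>1} z^j`. -/
def Vall (n : ℕ) : Polynomial ℂ :=
  ∑ j ∈ Finset.range n, if Nat.gcd j n = 1 then 0 else Polynomial.X ^ j

/-- `V(z) = ∑_{0≤j<n, gcd(j,n)>1} (j | n/gcd(j,n)) z^j`. -/
def Vjac (n : ℕ) : Polynomial ℂ :=
  ∑ j ∈ Finset.range n, if Nat.gcd j n = 1 then 0
    else Polynomial.C ((jacobiSym j (n / Nat.gcd j n) : ℤ) : ℂ) * Polynomial.X ^ j

/-!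
For odd square-free `n` the Jacobi symbol `χ = (· | n)` is a primitive Dirichlet character, so
Fourier inversion gives `χ x = τ⁻¹ ∑ₐ χ⁻¹(a) e(a x / n)` with a Gauss sum `|τ| = √n`. The
coefficients of `J_r` are a cyclic shift of those of `J`, and substituting the expansion yields
`|J_r(z)| ≤ n^{-1/2} ∑ₐ |∑_{j<n} (e(a/n) z)^j|`. The `n` points `e(a/n) z` are equally spaced on
the circle, so the geometric sums are bounded by `n / (2b) + n / (2(n - 1 - b))` except at the two
points closest to `1`; summing gives `|J_r(z)| ≤ √n (3 + log n)`, which is at most `2 √n log n`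
once `log n ≥ 3`, i.e. `n ≥ 21`. For smaller `n` the trivial bound `|J_r(z)| ≤ n` suffices.
-/

namespace DirichletCharacter

variable {R : Type*} [CommMonoidWithZero R] {n : ℕ}

lemma apply_eq_one_of_modEq_one (χ : DirichletCharacter R n) {k : ℕ} (hk : k.Coprime n)
    (h : k ≡ 1 [MOD χ.conductor]) : χ k = 1 := by
  have hprim := χ.primitiveCharacter_apply_of_isCoprime (Nat.isCoprime_iff_coprime.2 hk)
  rw [Int.cast_natCast, Int.cast_natCast, (ZMod.natCast_eq_natCast_iff _ _ _).2 h,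
    Nat.cast_one, MulChar.map_one] at hprim
  exact hprim.symm

lemma IsPrimitive.inv {χ : DirichletCharacter R n} (hχ : χ.IsPrimitive) : χ⁻¹.IsPrimitive := by
  rw [isPrimitive_def, conductor_inv, hχ]

end DirichletCharacter

def jacobiChar (n : ℕ) [NeZero n] : DirichletCharacter ℂ n where
  toFun x := jacobiSym x.val n
  map_one' := by
    rw [ZMod.val_one_eq_one_mod, Int.natCast_mod, ← jacobiSym.mod_left,
      Nat.cast_one, jacobiSym.one_left, Int.cast_one]
  map_mul' x y := by
    rw [ZMod.val_mul, Int.natCast_mod, ← jacobiSym.mod_left, Nat.cast_mul, jacobiSym.mul_left,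
      Int.cast_mul]
  map_nonunit' x hx := by
    rw [Int.cast_eq_zero, jacobiSym.eq_zero_iff_not_coprime, Int.gcd_natCast_natCast]
    exact fun h => hx (ZMod.natCast_zmod_val x ▸ (ZMod.isUnit_iff_coprime x.val n).2 h)

lemma jacobiChar_intCast (n : ℕ) [NeZero n] (k : ℤ) : jacobiChar n k = jacobiSym k n := by
  change ((jacobiSym ((k : ZMod n).val : ℤ) n : ℤ) : ℂ) = _
  rw [ZMod.val_intCast, ← jacobiSym.mod_left]

lemma jacobiChar_natCast (n : ℕ) [NeZero n] (k : ℕ) : jacobiChar n k = jacobiSym k n := by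
  rw [← Int.cast_natCast, jacobiChar_intCast]

lemma exists_modEq_one_jacobiSym_eq_neg_one {p m : ℕ} [Fact p.Prime] (hp : p ≠ 2)
    (hpm : p.Coprime m) : ∃ k : ℕ, k ≡ 1 [MOD m] ∧ jacobiSym k (p * m) = -1 := by
  have : NeZero m := ⟨fun h => (Fact.out : p.Prime).one_lt.ne' (by simpa [h] using hpm)⟩
  obtain ⟨v, hv⟩ := FiniteField.exists_nonsquare (F := ZMod p) (by rwa [ZMod.ringChar_zmod_n])
  obtain ⟨k, hkp, hkm⟩ := Nat.chineseRemainder hpm v.val 1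
  refine ⟨k, hkm, ?_⟩
  have hlegendre : jacobiSym k p = -1 := by
    rw [← jacobiSym.legendreSym.to_jacobiSym, legendreSym.eq_neg_one_iff',
      (ZMod.natCast_eq_natCast_iff _ _ _).2 hkp, ZMod.natCast_zmod_val]
    exact hv
  have hone : jacobiSym k m = 1 := by
    rw [jacobiSym.mod_left, ← Int.natCast_mod, hkm, Int.natCast_mod, ← jacobiSym.mod_left,
      Nat.cast_one, jacobiSym.one_left]
  rw [jacobiSym.mul_right, hlegendre, hone, mul_one]

/-- For odd square-free `n`, every proper divisor `d` of `n` misses some prime `p ∣ n`, and a unit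
that is `1` modulo `n / p` but a non-residue modulo `p` separates `(· | n)` from level `d`. -/
lemma isPrimitive_jacobiChar {n : ℕ} [NeZero n] (hodd : Odd n) (hsqf : Squarefree n) :
    (jacobiChar n).IsPrimitive := by
  set d := (jacobiChar n).conductor
  obtain ⟨c, hc⟩ : d ∣ n := (jacobiChar n).conductor_dvd_level
  by_contra hne
  obtain ⟨p, hp, hpc⟩ := Nat.exists_prime_and_dvd (n := c) (by
    rintro rfl
    exact hne (by rw [DirichletCharacter.isPrimitive_def]; lia))
  obtain ⟨e, rfl⟩ := hpc
  have : Fact p.Prime := ⟨hp⟩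
  have hn : n = p * (d * e) := by rw [hc]; ring
  have hp2 : p ≠ 2 := by
    rintro rfl
    exact Nat.not_even_iff_odd.2 hodd (even_iff_two_dvd.2 ⟨d * e, hn⟩)
  obtain ⟨k, hk1, hkn⟩ := exists_modEq_one_jacobiSym_eq_neg_one hp2
    (Nat.coprime_of_squarefree_mul (hn ▸ hsqf))
  rw [← hn] at hkn
  have hcop : k.Coprime n := by
    have := (jacobiSym.eq_zero_iff_not_coprime (a := k) (b := n)).not.1 (by rw [hkn]; decide)
    rwa [not_not, Int.gcd_natCast_natCast] at this
  have hχk := (jacobiChar n).apply_eq_one_of_modEq_one hcop (hk1.of_dvd (dvd_mul_right d e))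
  rw [jacobiChar_natCast, hkn] at hχk
  norm_num at hχk

namespace DirichletCharacter.IsPrimitive

open ZMod Finset

variable {N : ℕ} [NeZero N] {χ : DirichletCharacter ℂ N}

/-- Fourier inversion `𝓕 (𝓕 χ) = N • χ (-·)` evaluated at `1`, using `𝓕 χ = τ(χ) • χ⁻¹ (-·)`. -/
lemma gaussSum_mul_gaussSum_inv (hχ : χ.IsPrimitive) :
    gaussSum χ stdAddChar * gaussSum χ⁻¹ stdAddChar = χ (-1) * N := by
  have h := congr_fun (dft_dft (χ : ZMod N → ℂ)) 1
  rw [funext hχ.fourierTransform_eq_inv_mul_gaussSum, dft_mul_const, dft_comp_neg] at h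
  simp only at h
  rw [hχ.inv.fourierTransform_eq_inv_mul_gaussSum, inv_inv, neg_neg, MulChar.map_one, one_mul,
    smul_eq_mul] at h
  rw [mul_comm, h, mul_comm]

lemma norm_gaussSum (hχ : χ.IsPrimitive) : ‖gaussSum χ stdAddChar‖ = √N := by
  have hstar : star (gaussSum χ stdAddChar) = χ (-1) * gaussSum χ⁻¹ stdAddChar := by
    rw [star_gaussSum_eq, AddChar.inv_mulShift, gaussSum_mulShift_of_isPrimitive _ hχ.inv,
      inv_inv]
  have hsq : ‖gaussSum χ stdAddChar‖ ^ 2 = N := by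
    have h := hχ.gaussSum_mul_gaussSum_inv
    rw [← Complex.ofReal_inj, Complex.ofReal_pow, ← Complex.mul_conj', ← Complex.star_def,
      hstar, mul_left_comm, h, ← mul_assoc, ← map_mul, neg_one_mul, neg_neg, MulChar.map_one,
      one_mul, Complex.ofReal_natCast]
  rw [← hsq, Real.sqrt_sq (norm_nonneg _)]

lemma apply_eq_sum (hχ : χ.IsPrimitive) (x : ZMod N) :
    χ x = (gaussSum χ⁻¹ stdAddChar)⁻¹ * ∑ a, χ⁻¹ a * stdAddChar (a * x) := by
  have hτ : gaussSum χ⁻¹ stdAddChar ≠ 0 := by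
    rw [← norm_ne_zero_iff, hχ.inv.norm_gaussSum]
    exact Real.sqrt_ne_zero'.2 (Nat.cast_pos.2 (NeZero.pos N))
  have h := hχ.inv.fourierTransform_eq_inv_mul_gaussSum (-x)
  rw [inv_inv, neg_neg, dft_apply] at h
  rw [eq_inv_mul_iff_mul_eq₀ hτ, mul_comm, ← h]
  refine Finset.sum_congr rfl fun a _ => ?_
  rw [smul_eq_mul, mul_comm, mul_neg, neg_neg]

lemma norm_sum_apply_add_mul_pow_le (hχ : χ.IsPrimitive) (h : ZMod N) (z : ℂ) :
    ‖∑ j ∈ range N, χ (j + h) * z ^ j‖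
      ≤ (√N)⁻¹ * ∑ a : ZMod N, ‖∑ j ∈ range N, (stdAddChar a * z) ^ j‖ := by
  set τ := gaussSum χ⁻¹ stdAddChar
  have hexpand : ∑ j ∈ range N, χ (j + h) * z ^ j
      = τ⁻¹ * ∑ a : ZMod N, χ⁻¹ a * stdAddChar (a * h) * ∑ j ∈ range N, (stdAddChar a * z) ^ j := by
    have hψ (a : ZMod N) (j : ℕ) :
        stdAddChar (a * ((j : ZMod N) + h)) = stdAddChar (a * h) * stdAddChar a ^ j := by
      rw [mul_add, AddChar.map_add_eq_mul, mul_comm a, ← nsmul_eq_mul,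
        AddChar.map_nsmul_eq_pow, mul_comm]
    simp_rw [hχ.apply_eq_sum, hψ, mul_sum, sum_mul]
    rw [sum_comm]
    refine sum_congr rfl fun a _ => sum_congr rfl fun j _ => ?_
    ring
  rw [hexpand, norm_mul, norm_inv, hχ.inv.norm_gaussSum]
  gcongr
  refine (norm_sum_le _ _).trans (sum_le_sum fun a _ => ?_)
  rw [norm_mul, norm_mul, stdAddChar_apply, Circle.norm_coe, mul_one]
  exact mul_le_of_le_one_left (norm_nonneg _) (χ⁻¹.norm_le_one a)

end DirichletCharacter.IsPrimitive

open Finset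

lemma DirichletCharacter.norm_sum_apply_add_mul_pow_le_card {N : ℕ}
    (χ : DirichletCharacter ℂ N) (h : ZMod N) {z : ℂ} (hz : ‖z‖ = 1) :
    ‖∑ j ∈ range N, χ (j + h) * z ^ j‖ ≤ N := by
  refine (norm_sum_le _ _).trans ?_
  simpa [hz] using sum_le_sum fun j (_ : j ∈ range N) => χ.norm_le_one (j + h)

lemma ZMod.sum_val_eq_sum_range {M : Type*} [AddCommMonoid M] (N : ℕ) [NeZero N] (f : ℕ → M) :
    ∑ x : ZMod N, f x.val = ∑ b ∈ range N, f b := by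
  refine sum_nbij ZMod.val (fun x _ => mem_range.2 x.val_lt) (ZMod.val_injective N).injOn
    (fun b hb => ⟨b, mem_univ _, ZMod.val_cast_of_lt (mem_range.1 hb)⟩) fun _ _ => rfl

lemma X_pow_modByMonic_X_pow_sub_one {R : Type*} [CommRing R] [Nontrivial R] {n : ℕ}
    (hn : n ≠ 0) (a : ℕ) : X ^ a %ₘ (X ^ n - 1 : R[X]) = X ^ (a % n) := by
  have hmonic : (X ^ n - 1 : R[X]).Monic := by simpa using monic_X_pow_sub_C (1 : R) hn
  have hdvd : X ^ n - 1 ∣ (X ^ a - X ^ (a % n) : R[X]) := by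
    have h := sub_dvd_pow_sub_pow (X ^ n : R[X]) 1 (a / n)
    rw [one_pow, ← pow_mul] at h
    rw [show (X ^ a - X ^ (a % n) : R[X]) = X ^ (a % n) * (X ^ (n * (a / n)) - 1) by
      rw [mul_sub_one, ← pow_add, Nat.mod_add_div]]
    exact h.mul_left _
  rw [modByMonic_eq_of_dvd_sub hmonic hdvd, (modByMonic_eq_self_iff hmonic).2]
  rw [degree_X_pow, show (X ^ n - 1 : R[X]) = X ^ n - C 1 by rw [C_1],
    degree_X_pow_sub_C (Nat.pos_of_ne_zero hn)]
  exact_mod_cast Nat.mod_lt a (Nat.pos_of_ne_zero hn)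

lemma eval_rot (n : ℕ) [NeZero n] (r : ℝ) (c : ZMod n → ℂ) (z : ℂ) :
    (rot n r (∑ i ∈ range n, C (c i) * X ^ i)).eval z
      = ∑ j ∈ range n, c ((j : ZMod n) + ⌊(n : ℝ) * r⌋) * z ^ j := by
  have hmonic : (X ^ n - 1 : ℂ[X]).Monic := by simpa using monic_X_pow_sub_C (1 : ℂ) (NeZero.ne n)
  rw [rot]
  set m := ((-⌊(n : ℝ) * r⌋) % (n : ℤ)).toNat
  have hm : (m : ZMod n) = -⌊(n : ℝ) * r⌋ := by
    rw [← Int.cast_natCast, Int.toNat_of_nonneg (Int.emod_nonneg _ (by exact_mod_cast NeZero.ne n)),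
      ZMod.intCast_mod, Int.cast_neg]
  have hval (x : ZMod n) : (m + x.val) % n = (x + m).val := by
    rw [ZMod.val_add, ZMod.val_natCast, Nat.add_mod_mod, add_comm]
  rw [← modByMonic_eq_mod _ hmonic, mul_sum, ← modByMonicHom_apply, map_sum, eval_finsetSum]
  simp_rw [mul_left_comm (X ^ m), ← pow_add, C_mul', map_smul, modByMonicHom_apply,
    X_pow_modByMonic_X_pow_sub_one (NeZero.ne n), eval_smul, eval_X_pow, smul_eq_mul]
  rw [← ZMod.sum_val_eq_sum_range n (fun i => c i * z ^ ((m + i) % n)),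
    ← ZMod.sum_val_eq_sum_range n (fun j => c ((j : ZMod n) + ⌊(n : ℝ) * r⌋) * z ^ j),
    ← Equiv.sum_comp (Equiv.addRight (m : ZMod n))
      (fun x => c ((x.val : ZMod n) + ⌊(n : ℝ) * r⌋) * z ^ x.val)]
  refine sum_congr rfl fun x _ => ?_
  simp only [Equiv.coe_addRight, ZMod.natCast_zmod_val, hval]
  rw [add_assoc, hm, neg_add_cancel, add_zero]

lemma charPoly_eq_sum_jacobiChar (n : ℕ) [NeZero n] :
    charPoly n = ∑ j ∈ range n, C (jacobiChar n j) * X ^ j := by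
  simp only [charPoly, jacobiChar_natCast]

open Complex Real

lemma two_mul_mul_one_sub_le_sin_pi_mul {t : ℝ} (h0 : 0 ≤ t) (h1 : t ≤ 1) :
    2 * t * (1 - t) ≤ Real.sin (π * t) := by
  wlog ht : t ≤ 1 / 2 generalizing t
  · have h := this (t := 1 - t) (by linarith) (by linarith) (by linarith)
    rw [show π * (1 - t) = π - π * t by ring, Real.sin_pi_sub] at h
    linarith
  have hjordan := Real.mul_le_sin (x := π * t) (by positivity) (by nlinarith [pi_pos])
  rw [show 2 / π * (π * t) = 2 * t by field_simp] at hjordan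
  nlinarith

lemma norm_exp_two_pi_I_mul (s : ℝ) : ‖cexp (2 * π * I * s)‖ = 1 := by
  rw [show 2 * π * I * s = ((2 * π * s : ℝ) : ℂ) * I by push_cast; ring]
  exact norm_exp_ofReal_mul_I _

lemma norm_geom_sum_exp_le {t : ℝ} (h0 : 0 < t) (h1 : t < 1) (N : ℕ) :
    ‖∑ j ∈ range N, cexp (2 * π * I * t) ^ j‖ ≤ 1 / (2 * t) + 1 / (2 * (1 - t)) := by
  have hsin := two_mul_mul_one_sub_le_sin_pi_mul h0.le h1.le
  have hpos : 0 < 2 * t * (1 - t) := by nlinarith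
  set w := cexp (2 * π * I * t) with hw
  have hsub : ‖w - 1‖ = 2 * Real.sin (π * t) := by
    rw [hw, show 2 * π * I * t = I * (2 * π * t : ℝ) by push_cast; ring,
      norm_exp_I_mul_ofReal_sub_one, show 2 * π * t / 2 = π * t by ring, Real.norm_eq_abs,
      abs_of_nonneg (by linarith)]
  have hw1 : w ≠ 1 := fun h => by rw [h, sub_self, norm_zero] at hsub; linarith
  have hnum : ‖w ^ N - 1‖ ≤ 2 := by
    calc ‖w ^ N - 1‖ ≤ ‖w ^ N‖ + ‖(1 : ℂ)‖ := norm_sub_le _ _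
      _ = 2 := by rw [norm_pow, hw, norm_exp_two_pi_I_mul, one_pow, norm_one]; norm_num
  calc ‖∑ j ∈ range N, w ^ j‖ = ‖w ^ N - 1‖ / ‖w - 1‖ := by rw [geom_sum_eq hw1, norm_div]
    _ ≤ 2 / (2 * (2 * t * (1 - t))) := by rw [hsub]; gcongr
    _ = 1 / (2 * t) + 1 / (2 * (1 - t)) := by
      field_simp [(by linarith : 1 - t ≠ 0)]
      ring

lemma norm_geom_sum_exp_le_card (s : ℝ) (N : ℕ) :
    ‖∑ j ∈ range N, cexp (2 * π * I * s) ^ j‖ ≤ N := by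
  refine (norm_sum_le _ _).trans ?_
  simp [norm_exp_two_pi_I_mul]

lemma sum_norm_geom_sum_exp_le {N : ℕ} (hN : 2 ≤ N) {u : ℝ} (hu0 : 0 ≤ u) (hu1 : u < 1) :
    ∑ b ∈ range N, ‖∑ j ∈ range N, cexp (2 * π * I * (((b + u) / N : ℝ) : ℂ)) ^ j‖
      ≤ N * (3 + Real.log N) := by
  obtain ⟨m, rfl⟩ := Nat.exists_eq_add_of_le' hN
  set M : ℝ := ((m + 2 : ℕ) : ℝ) with hM
  have hMpos : 0 < M := by positivity
  have hMm : M = m + 2 := by rw [hM]; push_cast; ring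
  have hmiddle (i : ℕ) (hi : i ∈ range m) :
      ‖∑ j ∈ range (m + 2), cexp (2 * π * I * ((((i + 1 : ℕ) + u) / M : ℝ) : ℂ)) ^ j‖
        ≤ M / (2 * (i + 1)) + M / (2 * ((m - 1 - i : ℕ) + 1)) := by
    have him := mem_range.1 hi
    have hrefl : ((m - 1 - i : ℕ) : ℝ) + 1 = m - i := by
      rw [Nat.cast_sub (by lia), Nat.cast_sub (by lia)]; ring
    have him' : (i : ℝ) + 1 ≤ m := by exact_mod_cast him
    have ht0 : 0 < (((i + 1 : ℕ) : ℝ) + u) / M := by positivity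
    have ht1 : (((i + 1 : ℕ) : ℝ) + u) / M < 1 := by
      rw [div_lt_one hMpos, hMm]; push_cast; linarith
    refine (norm_geom_sum_exp_le ht0 ht1 _).trans (add_le_add ?_ ?_)
    · rw [show 1 / (2 * ((((i + 1 : ℕ) : ℝ) + u) / M)) = M / (2 * (((i + 1 : ℕ) : ℝ) + u)) by
        field_simp]
      refine div_le_div_of_nonneg_left hMpos.le (by positivity) ?_
      push_cast; linarith
    · rw [hrefl, show (1 : ℝ) - (((i + 1 : ℕ) : ℝ) + u) / M = (m + 1 - i - u) / M by
        field_simp; rw [hMm]; push_cast; ring,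
        show 1 / (2 * ((m + 1 - i - u) / M)) = M / (2 * (m + 1 - i - u)) by field_simp]
      refine div_le_div_of_nonneg_left hMpos.le (by linarith) ?_
      linarith
  have hharmonic : ∑ i ∈ range m, (M / (2 * (i + 1)) + M / (2 * ((m - 1 - i : ℕ) + 1)))
      = M * (harmonic m : ℝ) := by
    rw [sum_add_distrib, sum_range_reflect (fun i => M / (2 * ((i : ℝ) + 1))) m, ← two_mul,
      harmonic, Rat.cast_sum, mul_sum, mul_sum]
    refine sum_congr rfl fun i _ => ?_
    push_cast
    field_simp
  have hlog : (harmonic m : ℝ) ≤ 1 + Real.log M := by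
    refine (harmonic_le_one_add_log m).trans ?_
    rcases m.eq_zero_or_pos with rfl | hm
    · simp [hM, Real.log_nonneg]
    · rw [hM]; gcongr; lia
  rw [sum_range_succ, sum_range_succ']
  calc _ ≤ M * (harmonic m : ℝ) + M + M := by
        gcongr
        · exact (sum_le_sum hmiddle).trans hharmonic.le
        · exact norm_geom_sum_exp_le_card _ _
        · exact norm_geom_sum_exp_le_card _ _
    _ ≤ M * (3 + Real.log M) := by nlinarith

/-- Multiplying `z` by an `N`-th root of unity only permutes the terms, so `z` may be rotated to
`e(u / N)` with `0 ≤ u < 1`; then `ψ(b) z = e((b + u) / N)`. -/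
lemma sum_norm_geom_sum_stdAddChar_mul_le {N : ℕ} [NeZero N] (hN : 2 ≤ N) {z : ℂ}
    (hz : ‖z‖ = 1) :
    ∑ a : ZMod N, ‖∑ j ∈ range N, (ZMod.stdAddChar a * z) ^ j‖ ≤ N * (3 + Real.log N) := by
  set F : ℂ → ℝ := fun w => ‖∑ j ∈ range N, w ^ j‖
  set s := N * arg z / (2 * π)
  set k : ZMod N := ((⌊s⌋ : ℤ) : ZMod N)
  set w := ZMod.stdAddChar (-k) * z
  have hrot :
      ∑ a : ZMod N, F (ZMod.stdAddChar a * z) = ∑ a : ZMod N, F (ZMod.stdAddChar a * w) := by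
    rw [← Equiv.sum_comp (Equiv.addRight k) (fun a => F (ZMod.stdAddChar a * w))]
    refine sum_congr rfl fun a _ => ?_
    rw [Equiv.coe_addRight, ← mul_assoc, ← AddChar.map_add_eq_mul, add_neg_cancel_right]
  have hw (b : ℕ) : ZMod.stdAddChar (b : ZMod N) * w
      = cexp (2 * π * I * (((b + Int.fract s) / N : ℝ) : ℂ)) := by
    have hz' : z = cexp (arg z * I) := by
      conv_lhs => rw [← norm_mul_exp_arg_mul_I z, hz, ofReal_one, one_mul]
    have hN0 : (N : ℂ) ≠ 0 := Nat.cast_ne_zero.2 (NeZero.ne N)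
    rw [← mul_assoc, ← AddChar.map_add_eq_mul, show (b : ZMod N) + -k = ((b - ⌊s⌋ : ℤ) : ZMod N)
      by push_cast; ring, ZMod.stdAddChar_coe, hz', ← Complex.exp_add, Int.fract]
    congr 1
    simp only [s]
    push_cast
    field_simp
    ring
  calc ∑ a : ZMod N, F (ZMod.stdAddChar a * z)
      = ∑ b ∈ range N, F (ZMod.stdAddChar (b : ZMod N) * w) := by
        rw [hrot, ← ZMod.sum_val_eq_sum_range]
        simp only [ZMod.natCast_zmod_val]
    _ = ∑ b ∈ range N,
          ‖∑ j ∈ range N, cexp (2 * π * I * (((b + Int.fract s) / N : ℝ) : ℂ)) ^ j‖ := by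
        simp only [F, hw]
    _ ≤ N * (3 + Real.log N) :=
        sum_norm_geom_sum_exp_le hN (Int.fract_nonneg s) (Int.fract_lt_one s)

lemma div_le_log_of_pow_le {p q : ℕ} (hq : 0 < q) {y : ℝ} (hy : 0 < y)
    (h : (2.7182818286 : ℝ) ^ p ≤ y ^ q) : (p / q : ℝ) ≤ Real.log y := by
  have hexp : Real.exp p ≤ y ^ q := by
    rw [← mul_one (p : ℝ), Real.exp_nat_mul]
    exact (pow_le_pow_left₀ (Real.exp_pos 1).le Real.exp_one_lt_d9.le p).trans h
  rw [div_le_iff₀ (by exact_mod_cast hq), mul_comm, ← Real.log_pow]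
  exact (Real.le_log_iff_exp_le (by positivity)).2 hexp

lemma sqrt_le_two_mul_log {n : ℕ} (h3 : 3 ≤ n) (h20 : n ≤ 20) : √n ≤ 2 * Real.log n := by
  have hmono {a : ℕ} (ha : a ≤ n) (ha0 : 0 < a) : Real.log a ≤ Real.log n :=
    Real.log_le_log (by exact_mod_cast ha0) (by exact_mod_cast ha)
  rw [Real.sqrt_le_iff]
  refine ⟨by positivity, ?_⟩
  rcases (by lia : n ≤ 4 ∨ (5 ≤ n ∧ n ≤ 9) ∨ 10 ≤ n) with h | ⟨h5, h9⟩ | h10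
  · have hlog := (div_le_log_of_pow_le (p := 1) (q := 1) (y := 3) one_pos (by norm_num)
      (by norm_num)).trans (hmono h3 (by norm_num))
    have hn : (n : ℝ) ≤ 4 := by exact_mod_cast h
    simp only [Nat.cast_one, div_one] at hlog
    nlinarith
  · have hlog := (div_le_log_of_pow_le (p := 3) (q := 2) (y := 5) two_pos (by norm_num)
      (by norm_num)).trans (hmono h5 (by norm_num))
    have hn : (n : ℝ) ≤ 9 := by exact_mod_cast h9
    simp only [Nat.cast_ofNat] at hlog
    nlinarith
  · have hlog := (div_le_log_of_pow_le (p := 9) (q := 4) (y := 10) four_pos (by norm_num)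
      (by norm_num)).trans (hmono h10 (by norm_num))
    have hn : (n : ℝ) ≤ 20 := by exact_mod_cast h20
    simp only [Nat.cast_ofNat] at hlog
    nlinarith

/-- For odd square-free `n > 2` and real `r`, `max_{|z|=1} |J_r(z)| ≤ 2 n^{1/2} log n`. -/
theorem stmt_14 (n : ℕ) (hn : 2 < n) (hodd : Odd n) (hsqf : Squarefree n) (r : ℝ) :
    ∀ z : ℂ, ‖z‖ = 1 →
      ‖(rot n r (charPoly n)).eval z‖ ≤ 2 * Real.sqrt n * Real.log n := by
  intro z hz
  have : NeZero n := ⟨by lia⟩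
  rw [charPoly_eq_sum_jacobiChar, eval_rot]
  have hn0 : (0 : ℝ) < n := by positivity
  rcases le_or_gt 21 n with hbig | hsmall
  · have hlog : 3 ≤ Real.log n := by
      have h := (div_le_log_of_pow_le (p := 3) (q := 1) (y := 21) one_pos (by norm_num)
        (by norm_num)).trans
        (Real.log_le_log (by norm_num) (by exact_mod_cast hbig : (21 : ℝ) ≤ n))
      simpa using h
    calc _ ≤ (√n)⁻¹ * ∑ a : ZMod n, ‖∑ j ∈ range n, (ZMod.stdAddChar a * z) ^ j‖ :=
          (isPrimitive_jacobiChar hodd hsqf).norm_sum_apply_add_mul_pow_le _ z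
      _ ≤ (√n)⁻¹ * (n * (3 + Real.log n)) := by
          gcongr; exact sum_norm_geom_sum_stdAddChar_mul_le hn.le hz
      _ = √n * (3 + Real.log n) := by
          field_simp
          exact (Real.sq_sqrt hn0.le).symm
      _ ≤ 2 * √n * Real.log n := by nlinarith [Real.sqrt_nonneg n]
  · calc _ ≤ (n : ℝ) := (jacobiChar n).norm_sum_apply_add_mul_pow_le_card _ hz
      _ = √n * √n := (Real.mul_self_sqrt hn0.le).symm
      _ ≤ √n * (2 * Real.log n) := by gcongr; exact sqrt_le_two_mul_log hn (by lia)
      _ = 2 * √n * Real.log n := by ring
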